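/- For every fixed real u > 0, the SABR payoff function g(u; σ₀) converges, as σ₀ → ∞, to (π/√2)·cosh(u/2); that is, lim_{σ₀→∞} sinh(u)·∫_0^u sin((σ₀/2)·sinh s)/(sinh s · √(cosh u − cosh s)) ds = (π/√2)·cosh(u/2). -/

import Mathlib

open scoped Real

/-- The SABR payoff function
`g(u; σ₀) = sinh u · ∫_0^u sin((σ₀/2) sinh s) / (sinh s · √(cosh u − cosh s)) ds`. -/
noncomputable def sabrPayoff (σ₀ u : ℝ) : ℝ :=
  Real.sinh u *
    ∫ s in (0 : ℝ)..u,
      Real.sin (σ₀ / 2 * Real.sinh s) /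
        (Real.sinh s * Real.sqrt (Real.cosh u - Real.cosh s))

/-!
Substituting `y = sinh s` turns the integral into `∫₀^{sinh u} sin (λ y) / y · φ y dy` with
`λ = σ₀ / 2` and `φ = sabrWeight u`. The quotient `(φ y - φ 0) / y` is integrable, since the only
singularity of `φ`, at `y = sinh u`, is of order `(sinh u - y)^(-1/2)`; so the Riemann–Lebesgue
lemma kills its contribution, and what remains is `φ 0 · ∫₀^{λ sinh u} sinc → φ 0 · π / 2` by the
Dirichlet integral. That integral is computed along `X = (n + 1/2) π` from the Dirichlet kernel
(again with Riemann–Lebesgue) and extended to all `X` by the tail bound `|∫_Y^X sinc| ≤ 2 / Y`.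
Finally `sinh u · φ 0 = √2 cosh (u / 2)`.
-/

open scoped FourierTransform Interval
open Real MeasureTheory Filter Set Topology

theorem tendsto_integral_sin_mul_atTop {f : ℝ → ℝ} (hf : Integrable f) :
    Tendsto (fun t : ℝ => ∫ x, sin (t * x) * f x) atTop (𝓝 0) := by
  have him : ∀ t, ∫ x, sin (t * x) * f x = -(𝓕 (fun x => (f x : ℂ)) (t / (2 * π))).im := by
    intro t
    rw [fourier_real_eq_integral_exp_smul, ← RCLike.im_eq_complex_im, ← integral_im,
      ← integral_neg]
    · congr 1; ext x
      rw [smul_eq_mul, RCLike.im_eq_complex_im, Complex.im_mul_ofReal,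
        Complex.exp_ofReal_mul_I_im, ← neg_mul, ← sin_neg]
      field_simp
    · refine (hf.ofReal (𝕜 := ℂ)).bdd_mul (c := 1) (by fun_prop) (ae_of_all _ fun x => ?_)
      rw [Complex.norm_exp_ofReal_mul_I]
  have hscale : Tendsto (fun t : ℝ => t / (2 * π)) atTop (cocompact ℝ) :=
    (tendsto_id.atTop_div_const (by positivity)).mono_right
      (by rw [cocompact_eq_atBot_atTop]; exact le_sup_right)
  simpa [him] using ((Complex.continuous_im.tendsto 0).comp
    ((zero_at_infty_fourier _).comp hscale)).neg

theorem intervalIntegrable_sin_mul_of_integrableOn {a t : ℝ} {ψ : ℝ → ℝ} (ha : 0 ≤ a)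
    (hψ : IntegrableOn ψ (Ioc 0 a)) :
    IntervalIntegrable (fun x => sin (t * x) * ψ x) volume 0 a :=
  (intervalIntegrable_iff_integrableOn_Ioc_of_le ha).2 <|
    hψ.bdd_mul (c := 1) (by fun_prop) (ae_of_all _ fun _ => abs_sin_le_one _)

theorem tendsto_integral_sin_mul_atTop_of_integrableOn {a : ℝ} {ψ : ℝ → ℝ} (ha : 0 ≤ a)
    (hψ : IntegrableOn ψ (Ioc 0 a)) :
    Tendsto (fun t => ∫ x in (0 : ℝ)..a, sin (t * x) * ψ x) atTop (𝓝 0) := by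
  have h := tendsto_integral_sin_mul_atTop ((integrable_indicator_iff measurableSet_Ioc).2 hψ)
  refine h.congr fun t => ?_
  rw [intervalIntegral.integral_of_le ha, ← integral_indicator measurableSet_Ioc]
  congr 1; ext x
  by_cases hx : x ∈ Ioc 0 a <;> simp [hx]

theorem sin_mul_div_eq_mul_sinc (t : ℝ) {x : ℝ} (hx : x ≠ 0) :
    sin (t * x) / x = t * sinc (t * x) := by
  rcases eq_or_ne t 0 with rfl | ht
  · simp
  · rw [sinc_of_ne_zero (mul_ne_zero ht hx)]
    field_simp

theorem sin_mul_div_ae_eq_mul_sinc (t : ℝ) :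
    (fun x => sin (t * x) / x) =ᵐ[volume] fun x => t * sinc (t * x) := by
  filter_upwards [volume.ae_ne 0] with x hx using sin_mul_div_eq_mul_sinc t hx

theorem intervalIntegrable_sin_mul_div (t a b : ℝ) :
    IntervalIntegrable (fun x => sin (t * x) / x) volume a b :=
  (Continuous.intervalIntegrable (by fun_prop) a b).congr_ae
    (ae_restrict_of_ae (sin_mul_div_ae_eq_mul_sinc t).symm)

theorem integral_sin_mul_div_eq_integral_sinc (t a : ℝ) :
    ∫ x in (0 : ℝ)..a, sin (t * x) / x = ∫ y in (0 : ℝ)..t * a, sinc y := by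
  rw [intervalIntegral.integral_congr_ae_restrict
    (ae_restrict_of_ae (sin_mul_div_ae_eq_mul_sinc t)), intervalIntegral.integral_const_mul,
    intervalIntegral.mul_integral_comp_mul_left, mul_zero]

theorem sin_nat_add_half_mul (n : ℕ) (x : ℝ) :
    sin ((n + 1 / 2) * x) = sin (x / 2) * (1 + 2 * ∑ k ∈ Finset.range n, cos ((k + 1) * x)) := by
  induction n with
  | zero => simp; ring_nf
  | succ n ih =>
    have key : sin (((n : ℝ) + 1 + 1 / 2) * x) - sin (((n : ℝ) + 1 / 2) * x)
        = 2 * sin (x / 2) * cos (((n : ℝ) + 1) * x) := by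
      rw [sin_sub_sin]; ring_nf
    push_cast
    rw [Finset.sum_range_succ]
    linear_combination ih + key

theorem sin_nat_add_half_mul_div_eqOn (n : ℕ) :
    EqOn (fun x => sin ((n + 1 / 2) * x) / (2 * sin (x / 2)))
      (fun x => 1 / 2 + ∑ k ∈ Finset.range n, cos ((k + 1) * x)) (Ι 0 π) := by
  intro x hx
  rw [uIoc_of_le pi_pos.le] at hx
  have : sin (x / 2) ≠ 0 :=
    (sin_pos_of_pos_of_lt_pi (by linarith [hx.1]) (by linarith [hx.2, pi_pos])).ne'
  simp only [sin_nat_add_half_mul]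
  field_simp

theorem intervalIntegrable_sin_nat_add_half_mul_div (n : ℕ) :
    IntervalIntegrable (fun x => sin ((n + 1 / 2) * x) / (2 * sin (x / 2))) volume 0 π :=
  (Continuous.intervalIntegrable (by fun_prop) 0 π).congr (sin_nat_add_half_mul_div_eqOn n).symm

theorem integral_sin_nat_add_half_mul_div (n : ℕ) :
    ∫ x in (0 : ℝ)..π, sin ((n + 1 / 2) * x) / (2 * sin (x / 2)) = π / 2 := by
  have hcos : ∀ k : ℕ, ∫ x in (0 : ℝ)..π, cos ((k + 1) * x) = 0 := by
    intro k
    rw [intervalIntegral.integral_comp_mul_left cos (by positivity), mul_zero, integral_cos,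
      show ((k : ℝ) + 1) * π = ((k + 1 : ℕ) : ℝ) * π by push_cast; ring, sin_nat_mul_pi]
    simp
  rw [intervalIntegral.integral_congr_ae (ae_of_all _ (sin_nat_add_half_mul_div_eqOn n)),
    intervalIntegral.integral_add (by simp) (Continuous.intervalIntegrable (by fun_prop) _ _),
    intervalIntegral.integral_finsetSum fun k _ =>
      Continuous.intervalIntegrable (by fun_prop) _ _]
  simp [hcos]
  ring

theorem abs_inv_sub_inv_two_mul_sin_half_le {x : ℝ} (hx : x ∈ Ioc 0 π) :
    |x⁻¹ - (2 * sin (x / 2))⁻¹| ≤ 1 := by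
  obtain ⟨hx0, hxπ⟩ := hx
  have hsin_le : sin (x / 2) ≤ x / 2 := sin_le (by linarith)
  have hcube : x / 2 - (x / 2) ^ 3 / 6 ≤ sin (x / 2) := sin_ge_sub_cube (by linarith)
  have hjordan : x / π ≤ sin (x / 2) :=
    calc x / π = 2 / π * (x / 2) := by ring
      _ ≤ sin (x / 2) := mul_le_sin (by linarith) (by linarith)
  have hsin : 0 < sin (x / 2) := (div_pos hx0 pi_pos).trans_le hjordan
  rw [abs_sub_comm, abs_of_nonneg (sub_nonneg.2 (inv_anti₀ (by positivity) (by linarith))),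
    inv_sub_inv (by positivity) hx0.ne', div_le_one (by positivity)]
  nlinarith [mul_le_mul_of_nonneg_left hjordan hx0.le, mul_pos hx0 hx0, pi_le_four]

theorem integrableOn_inv_sub_inv_two_mul_sin_half :
    IntegrableOn (fun x => x⁻¹ - (2 * sin (x / 2))⁻¹) (Ioc 0 π) :=
  Measure.integrableOn_of_bounded (M := 1) measure_Ioc_lt_top.ne (by fun_prop)
    ((ae_restrict_iff' measurableSet_Ioc).2 (ae_of_all _ fun _ hx =>
      abs_inv_sub_inv_two_mul_sin_half_le hx))

theorem tendsto_integral_sinc_nat_add_half_mul_pi :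
    Tendsto (fun n : ℕ => ∫ y in (0 : ℝ)..(n + 1 / 2) * π, sinc y) atTop (𝓝 (π / 2)) := by
  have hsplit : ∀ n : ℕ, ∫ y in (0 : ℝ)..(n + 1 / 2) * π, sinc y = π / 2 +
      ∫ x in (0 : ℝ)..π, sin ((n + 1 / 2) * x) * (x⁻¹ - (2 * sin (x / 2))⁻¹) := by
    intro n
    rw [← integral_sin_mul_div_eq_integral_sinc, ← integral_sin_nat_add_half_mul_div n,
      ← intervalIntegral.integral_add]
    · congr 1; ext x; ring
    · exact intervalIntegrable_sin_nat_add_half_mul_div n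
    · exact intervalIntegrable_sin_mul_of_integrableOn pi_pos.le
        integrableOn_inv_sub_inv_two_mul_sin_half
  simp_rw [hsplit]
  have hrem := (tendsto_integral_sin_mul_atTop_of_integrableOn pi_pos.le
    integrableOn_inv_sub_inv_two_mul_sin_half).comp
    (tendsto_atTop_add_const_right _ (1 / 2 : ℝ) tendsto_natCast_atTop_atTop)
  simpa using hrem.const_add (π / 2)

theorem abs_integral_sinc_sub_le {X Y : ℝ} (hY : 0 < Y) (hYX : Y ≤ X) :
    |(∫ t in (0 : ℝ)..X, sinc t) - ∫ t in (0 : ℝ)..Y, sinc t| ≤ 2 / Y := by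
  have hX : 0 < X := hY.trans_le hYX
  have hpos : ∀ t ∈ [[Y, X]], 0 < t := fun t ht =>
    hY.trans_le (by rw [uIcc_of_le hYX] at ht; exact ht.1)
  have hinv_sq : IntervalIntegrable (fun t : ℝ => (t ^ 2)⁻¹) volume Y X :=
    ((continuousOn_pow 2).inv₀ fun t ht => (pow_pos (hpos t ht) 2).ne').intervalIntegrable
  have hparts : ∫ t in Y..X, t⁻¹ * sin t
      = X⁻¹ * -cos X - Y⁻¹ * -cos Y - ∫ t in Y..X, -(t ^ 2)⁻¹ * -cos t :=
    intervalIntegral.integral_mul_deriv_eq_deriv_mul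
      (fun t ht => hasDerivAt_inv (hpos t ht).ne')
      (fun t _ => by simpa using (hasDerivAt_cos t).neg) hinv_sq.neg
      (continuous_sin.intervalIntegrable _ _)
  have hrem : |∫ t in Y..X, -(t ^ 2)⁻¹ * -cos t| ≤ Y⁻¹ - X⁻¹ :=
    calc |∫ t in Y..X, -(t ^ 2)⁻¹ * -cos t| ≤ ∫ t in Y..X, (t ^ 2)⁻¹ := by
          refine (Real.norm_eq_abs _).symm.trans_le <| intervalIntegral.norm_integral_le_of_norm_le
            hYX (ae_of_all volume fun t _ => ?_) hinv_sq
          rw [neg_mul_neg, norm_mul, norm_inv, norm_pow, Real.norm_eq_abs, sq_abs]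
          exact mul_le_of_le_one_right (by positivity) (abs_cos_le_one t)
      _ = Y⁻¹ - X⁻¹ := by
          rw [intervalIntegral.integral_eq_sub_of_hasDerivAt (f := fun t => -t⁻¹)
            (fun t ht => by simpa using (hasDerivAt_inv (hpos t ht).ne').fun_neg) hinv_sq]
          ring
  have hboundary : ∀ Z > 0, |Z⁻¹ * -cos Z| ≤ Z⁻¹ := fun Z hZ => by
    rw [abs_mul, abs_neg, abs_of_pos (inv_pos.2 hZ)]
    exact mul_le_of_le_one_right (inv_pos.2 hZ).le (abs_cos_le_one Z)
  have hsinc : EqOn sinc (fun t => t⁻¹ * sin t) [[Y, X]] := fun t ht => by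
    simp only [sinc_of_ne_zero (hpos t ht).ne', div_eq_inv_mul]
  rw [intervalIntegral.integral_interval_sub_left
    (continuous_sinc.intervalIntegrable (μ := volume) 0 X) (continuous_sinc.intervalIntegrable 0 Y),
    intervalIntegral.integral_congr hsinc, hparts]
  have hX' := hboundary X hX
  have hY' := hboundary Y hY
  rw [abs_le] at hX' hY' hrem ⊢
  constructor <;> linarith [show 2 / Y = Y⁻¹ + Y⁻¹ by ring]

theorem tendsto_integral_sinc_atTop :
    Tendsto (fun X => ∫ t in (0 : ℝ)..X, sinc t) atTop (𝓝 (π / 2)) := by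
  have hbound : ∀ X > 0, |(∫ t in (0 : ℝ)..X, sinc t) - π / 2| ≤ 2 / X := by
    intro X hX
    have hgrid : Tendsto (fun n : ℕ => ((n : ℝ) + 1 / 2) * π) atTop atTop :=
      (tendsto_atTop_add_const_right _ _ tendsto_natCast_atTop_atTop).atTop_mul_const pi_pos
    refine le_of_tendsto ((tendsto_const_nhds (x := ∫ t in (0 : ℝ)..X, sinc t)).sub
      tendsto_integral_sinc_nat_add_half_mul_pi).abs ?_
    filter_upwards [hgrid.eventually_ge_atTop X] with n hn
    rw [abs_sub_comm]
    exact abs_integral_sinc_sub_le hX hn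
  rw [tendsto_iff_norm_sub_tendsto_zero]
  refine squeeze_zero' (Eventually.of_forall fun _ => norm_nonneg _) ?_
    ((tendsto_const_nhds (x := (2 : ℝ))).div_atTop tendsto_id)
  filter_upwards [eventually_gt_atTop 0] with X hX using hbound X hX

theorem tendsto_integral_sin_mul_div_mul_atTop {a c : ℝ} {φ : ℝ → ℝ} (ha : 0 < a)
    (hφ : IntegrableOn (fun x => (φ x - c) / x) (Ioc 0 a)) :
    Tendsto (fun t => ∫ x in (0 : ℝ)..a, sin (t * x) / x * φ x) atTop (𝓝 (c * (π / 2))) := by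
  have hsplit : ∀ t, ∫ x in (0 : ℝ)..a, sin (t * x) / x * φ x
      = c * (∫ y in (0 : ℝ)..t * a, sinc y)
        + ∫ x in (0 : ℝ)..a, sin (t * x) * ((φ x - c) / x) := by
    intro t
    rw [← integral_sin_mul_div_eq_integral_sinc, ← intervalIntegral.integral_const_mul,
      ← intervalIntegral.integral_add ((intervalIntegrable_sin_mul_div t 0 a).const_mul c)
        (intervalIntegrable_sin_mul_of_integrableOn ha.le hφ)]
    congr 1; ext x; ring
  simp_rw [hsplit]
  have hmain := (tendsto_integral_sinc_atTop.comp (tendsto_id.atTop_mul_const ha)).const_mul c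
  simpa using hmain.add (tendsto_integral_sin_mul_atTop_of_integrableOn ha.le hφ)

theorem integral_cosh_mul_comp_sinh {a b : ℝ} (hab : a ≤ b) (g : ℝ → ℝ) :
    ∫ s in a..b, cosh s * g (sinh s) = ∫ y in sinh a..sinh b, g y := by
  rw [intervalIntegral.integral_of_le hab, intervalIntegral.integral_of_le (sinh_le_sinh.2 hab),
    ← integral_Icc_eq_integral_Ioc, ← integral_Icc_eq_integral_Ioc]
  exact integral_Icc_deriv_smul_of_deriv_nonneg continuous_sinh.continuousOn
    (fun s _ => hasDerivAt_sinh s) (fun s _ => (cosh_pos s).le) hab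

theorem integrableOn_Ioc_sinh_iff {a b : ℝ} (hab : a ≤ b) (g : ℝ → ℝ) :
    IntegrableOn g (Ioc (sinh a) (sinh b)) ↔
      IntegrableOn (fun s => cosh s * g (sinh s)) (Ioc a b) := by
  rw [← integrableOn_Icc_iff_integrableOn_Ioc, ← integrableOn_Icc_iff_integrableOn_Ioc]
  exact (integrableOn_Icc_deriv_smul_iff_of_deriv_nonneg continuous_sinh.continuousOn
    (fun s _ => hasDerivAt_sinh s) (fun s _ => (cosh_pos s).le) hab).symm

theorem cosh_sub_cosh (u s : ℝ) :
    cosh u - cosh s = 2 * sinh ((u + s) / 2) * sinh ((u - s) / 2) := by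
  have hu : cosh u = cosh ((u + s) / 2 + (u - s) / 2) := by ring_nf
  have hs : cosh s = cosh ((u + s) / 2 - (u - s) / 2) := by ring_nf
  rw [hu, hs, cosh_add, cosh_sub]
  ring

theorem sinh_half_mul_sub_le_cosh_sub_cosh {s u : ℝ} (hs : 0 ≤ s) (hsu : s ≤ u) :
    sinh (u / 2) * (u - s) ≤ cosh u - cosh s := by
  rw [cosh_sub_cosh]
  have h1 : sinh (u / 2) ≤ sinh ((u + s) / 2) := sinh_le_sinh.2 (by linarith)
  have h2 : (u - s) / 2 ≤ sinh ((u - s) / 2) := self_le_sinh_iff.2 (by linarith)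
  have h3 : 0 ≤ sinh (u / 2) := sinh_nonneg_iff.2 (by linarith)
  nlinarith

theorem cosh_sub_one_le_sinh {s : ℝ} (hs : 0 ≤ s) : cosh s - 1 ≤ sinh s := by
  have : cosh s - sinh s ≤ 1 := by rw [cosh_sub_sinh]; exact exp_le_one_iff.2 (by linarith)
  linarith

theorem inv_sqrt_sub_inv_sqrt_le {A B : ℝ} (hA : 0 < A) (hAB : A ≤ B) :
    (√A)⁻¹ - (√B)⁻¹ ≤ (B - A) / (B * √A) := by
  obtain ⟨a, ha, rfl⟩ : ∃ a, 0 < a ∧ a ^ 2 = A := ⟨√A, sqrt_pos.2 hA, sq_sqrt hA.le⟩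
  obtain ⟨b, hb, rfl⟩ : ∃ b, 0 < b ∧ b ^ 2 = B :=
    ⟨√B, sqrt_pos.2 (hA.trans_le hAB), sq_sqrt (hA.trans_le hAB).le⟩
  have hab : a ≤ b := by nlinarith
  rw [sqrt_sq ha.le, sqrt_sq hb.le, inv_sub_inv ha.ne' hb.ne',
    div_le_div_iff₀ (by positivity) (by positivity)]
  nlinarith [mul_le_mul_of_nonneg_left hab ha.le, mul_pos ha hb]

theorem abs_inv_sqrt_sub_mul_cosh_div_sinh_le {u s : ℝ} (hs : 0 < s) (hsu : s < u) :
    |((√(cosh u - cosh s))⁻¹ - (√(cosh u - 1))⁻¹ * cosh s) / sinh s|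
      ≤ (√(cosh u - 1))⁻¹ + (√(cosh u - cosh s))⁻¹ / (cosh u - 1) := by
  have hA : 0 < cosh u - cosh s := by
    rw [sub_pos, cosh_lt_cosh, abs_of_pos hs, abs_of_pos (hs.trans hsu)]; exact hsu
  have hAB : cosh u - cosh s ≤ cosh u - 1 := by linarith [one_le_cosh s]
  have hsinh : 0 < sinh s := sinh_pos_iff.2 hs
  have hratio : (cosh s - 1) / sinh s ≤ 1 := (div_le_one hsinh).2 (cosh_sub_one_le_sinh hs.le)
  have hratio0 : 0 ≤ (cosh s - 1) / sinh s := div_nonneg (by linarith [one_le_cosh s]) hsinh.le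
  set A := cosh u - cosh s
  set B := cosh u - 1
  have hsqrt : 0 < √A := sqrt_pos.2 hA
  have hp0 : 0 ≤ ((√A)⁻¹ - (√B)⁻¹) / sinh s :=
    div_nonneg (sub_nonneg.2 (inv_anti₀ hsqrt (sqrt_le_sqrt hAB))) hsinh.le
  have hp1 : ((√A)⁻¹ - (√B)⁻¹) / sinh s ≤ (√A)⁻¹ / B :=
    calc ((√A)⁻¹ - (√B)⁻¹) / sinh s ≤ (B - A) / (B * √A) / sinh s :=
          div_le_div_of_nonneg_right (inv_sqrt_sub_inv_sqrt_le hA hAB) hsinh.le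
      _ = (cosh s - 1) / sinh s * ((√A)⁻¹ / B) := by
          rw [show B - A = cosh s - 1 by simp only [A, B]; ring]; field_simp
      _ ≤ (√A)⁻¹ / B := mul_le_of_le_one_left (div_nonneg (by positivity) (by linarith)) hratio
  have hq : (√B)⁻¹ * ((cosh s - 1) / sinh s) ≤ (√B)⁻¹ :=
    mul_le_of_le_one_right (by positivity) hratio
  have hq0 : 0 ≤ (√B)⁻¹ * ((cosh s - 1) / sinh s) := by positivity
  rw [show ((√A)⁻¹ - (√B)⁻¹ * cosh s) / sinh s
      = ((√A)⁻¹ - (√B)⁻¹) / sinh s - (√B)⁻¹ * ((cosh s - 1) / sinh s) by ring, abs_le]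
  constructor <;> linarith

theorem inv_sqrt_cosh_sub_cosh_le {u s : ℝ} (hs : 0 < s) (hsu : s < u) :
    (√(cosh u - cosh s))⁻¹ ≤ (√(sinh (u / 2)))⁻¹ * (√(u - s))⁻¹ := by
  rw [← mul_inv, ← sqrt_mul (sinh_nonneg_iff.2 (by linarith))]
  exact inv_anti₀ (sqrt_pos.2 (mul_pos (sinh_pos_iff.2 (by linarith)) (by linarith)))
    (sqrt_le_sqrt (sinh_half_mul_sub_le_cosh_sub_cosh hs.le hsu.le))

theorem integrableOn_inv_sqrt_sub {u : ℝ} (hu : 0 ≤ u) :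
    IntegrableOn (fun s => (√(u - s))⁻¹) (Ioo 0 u) := by
  have h : IntervalIntegrable (fun s => (u - s) ^ (-(1 / 2) : ℝ)) volume 0 u := by
    simpa using (intervalIntegral.intervalIntegrable_rpow' (r := -(1 / 2)) (by norm_num)
      (a := u) (b := 0)).comp_sub_left u
  rw [intervalIntegrable_iff_integrableOn_Ioc_of_le hu] at h
  refine (h.mono_set Ioo_subset_Ioc_self).congr_fun (fun s hs => ?_) measurableSet_Ioo
  rw [sqrt_eq_rpow, ← rpow_neg (by linarith [hs.2])]

theorem integrableOn_inv_sqrt_cosh_sub_mul_cosh_div_sinh {u : ℝ} (hu : 0 < u) :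
    IntegrableOn (fun s => ((√(cosh u - cosh s))⁻¹ - (√(cosh u - 1))⁻¹ * cosh s) / sinh s)
      (Ioo 0 u) := by
  have hbound : IntegrableOn (fun s => (√(cosh u - 1))⁻¹ +
      (√(sinh (u / 2)))⁻¹ * (√(u - s))⁻¹ / (cosh u - 1)) (Ioo 0 u) :=
    (integrableOn_const measure_Ioo_lt_top.ne).add
      (((integrableOn_inv_sqrt_sub hu.le).const_mul _).div_const _)
  refine hbound.mono' (Measurable.aestronglyMeasurable (by fun_prop))
    ((ae_restrict_iff' measurableSet_Ioo).2 (ae_of_all _ fun s hs => ?_))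
  refine (abs_inv_sqrt_sub_mul_cosh_div_sinh_le hs.1 hs.2).trans ?_
  gcongr
  · linarith [one_lt_cosh.2 hu.ne']
  · exact inv_sqrt_cosh_sub_cosh_le hs.1 hs.2

noncomputable def sabrWeight (u y : ℝ) : ℝ :=
  (cosh (arsinh y) * √(cosh u - cosh (arsinh y)))⁻¹

theorem sabrWeight_zero (u : ℝ) : sabrWeight u 0 = (√(cosh u - 1))⁻¹ := by
  simp [sabrWeight]

theorem integral_sin_mul_sinh_div_eq_integral_sabrWeight {u : ℝ} (hu : 0 ≤ u) (t : ℝ) :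
    ∫ s in (0 : ℝ)..u, sin (t * sinh s) / (sinh s * √(cosh u - cosh s))
      = ∫ y in (0 : ℝ)..sinh u, sin (t * y) / y * sabrWeight u y := by
  have h := integral_cosh_mul_comp_sinh hu fun y => sin (t * y) / y * sabrWeight u y
  rw [sinh_zero] at h
  rw [← h]
  congr 1; ext s
  rw [sabrWeight, arsinh_sinh]
  field_simp [(cosh_pos s).ne']

theorem integrableOn_sabrWeight_sub_div {u : ℝ} (hu : 0 < u) :
    IntegrableOn (fun y => (sabrWeight u y - sabrWeight u 0) / y) (Ioc 0 (sinh u)) := by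
  rw [← sinh_zero, integrableOn_Ioc_sinh_iff hu.le, integrableOn_Ioc_iff_integrableOn_Ioo]
  refine (integrableOn_inv_sqrt_cosh_sub_mul_cosh_div_sinh hu).congr_fun (fun s _ => ?_)
    measurableSet_Ioo
  rw [sinh_zero, sabrWeight_zero, sabrWeight, arsinh_sinh]
  field_simp [(cosh_pos s).ne']

theorem sinh_mul_sabrWeight_zero {u : ℝ} (hu : 0 < u) :
    sinh u * sabrWeight u 0 = √2 * cosh (u / 2) := by
  have hhalf : 0 < sinh (u / 2) := sinh_pos_iff.2 (half_pos hu)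
  have hcosh : cosh u - 1 = 2 * sinh (u / 2) ^ 2 := by
    simpa [sq, mul_assoc] using cosh_sub_cosh u 0
  have hsinh : sinh u = 2 * sinh (u / 2) * cosh (u / 2) := by
    rw [← sinh_two_mul, mul_div_cancel₀ u two_ne_zero]
  rw [sabrWeight_zero, hcosh, hsinh, sqrt_mul zero_le_two, sqrt_sq hhalf.le]
  field_simp
  norm_num

/-- For fixed `u > 0`, the SABR payoff `g(u; σ₀)` tends to `(π/√2) cosh(u/2)` as
`σ₀ → ∞`. -/
theorem sabrPayoff_tendsto_of_large_vol (u : ℝ) (hu : 0 < u) :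
    Filter.Tendsto (fun σ₀ : ℝ => sabrPayoff σ₀ u) Filter.atTop
      (nhds (π / Real.sqrt 2 * Real.cosh (u / 2))) := by
  have hlim := (tendsto_integral_sin_mul_div_mul_atTop (sinh_pos_iff.2 hu)
    (integrableOn_sabrWeight_sub_div hu)).comp (tendsto_id.atTop_div_const two_pos)
  have hvalue : sinh u * (sabrWeight u 0 * (π / 2)) = π / √2 * cosh (u / 2) := by
    rw [← mul_assoc, sinh_mul_sabrWeight_zero hu]
    field_simp
    norm_num
  rw [← hvalue]
  refine (hlim.const_mul (sinh u)).congr fun σ₀ => ?_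
  simp only [sabrPayoff, Function.comp_apply, id,
    integral_sin_mul_sinh_div_eq_integral_sabrWeight hu.le]
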